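/- (Non-degeneracy of the pairing between primal and dual state spaces.) In the setting of the dual selection with rk X̃ = k: let Ñ_j be the state matrices of the KV-trellis T_{(X̃,H,S)} and P_j the (n−k)×(n−k) matrices whose row m (m ∈ K̂) is v_m if j ∈ (m,a_m] and 0 otherwise. Then rk Ñ_j = rk P_j = rk (Ñ_j P_jᵀ) for every j; consequently the bilinear form (α Ñ_j, β P_j) ↦ α Ñ_j P_jᵀ βᵀ on im(Ñ_j) × im(P_j) is well-defined and non-degenerate. -/

import Mathlib

open scoped Classical
open Matrix

def circIoc {n : ℕ} (a b : ZMod n) : Set (ZMod n) :=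
  {x | 1 ≤ (x - a).val ∧ (x - a).val ≤ (b - a).val}

def circIcc {n : ℕ} (a b : ZMod n) : Set (ZMod n) :=
  {x | (x - a).val ≤ (b - a).val}

def IsSpan {n : ℕ} {F : Type*} [Field F] (c : ZMod n → F) (a b : ZMod n) : Prop :=
  c a ≠ 0 ∧ c b ≠ 0 ∧ ∀ j, c j ≠ 0 → j ∈ circIcc a b

/-!
Write `M = Ñ_j P_jᵀ`. Since `Ñ_j v_m = 0` whenever `j ∉ (m, a_m]`, the rows of `P_j` that were
zeroed out do not matter, and `M = Ñ_j Vᵀ` with `V` the invertible matrix of all probing vectors;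
hence `M` and `Ñ_j` have the same left kernel.

For the right kernel, unrolling the recursion `N_{i+1} = N_i + x_{·,i} H_{·,i}ᵀ` from
`N_m v_m = 0` gives `(Ñ_j v_m)_l = ⟨x_l, w_m⟩`, where `w_m` is `vᵀ_m H` truncated to the window
`[m, j)`. So if `M β = 0`, the vector `∑ β_m w_m` (over active `m`) is orthogonal to the rows of
`X̃`, hence to the whole code. Pair it with the generator `x_b` of the active `b` with `β_b ≠ 0`
and the longest window: the support `[a_b, b]` of `x_b` meets the windows only in `b`, which lies
only in the window of `b`, so the pairing is `β_b x_b(b) (vᵀ_b H)_b = β_b x_b(b) ≠ 0`, a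
contradiction. Thus `M` and `P_jᵀ` have the same right kernel, and all the ranks agree.
-/

def circIco {n : ℕ} (a b : ZMod n) : Set (ZMod n) :=
  {x | (x - a).val < (b - a).val}

section CyclicWindows

variable {n : ℕ}

lemma eq_of_val_sub_eq_zero {a b : ZMod n} (h : (a - b).val = 0) : a = b :=
  sub_eq_zero.mp ((ZMod.val_eq_zero _).mp h)

lemma left_notMem_circIoc (a b : ZMod n) : a ∉ circIoc a b := by
  simp [circIoc]

variable [NeZero n]

lemma ZMod.val_sub_add_val_sub (a b c : ZMod n) :
    (b - a).val + (c - b).val = (c - a).val ∨ (b - a).val + (c - b).val = (c - a).val + n := by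
  have h : (b - a) + (c - b) = c - a := by abel
  rcases lt_or_ge ((b - a).val + (c - b).val) n with hlt | hge
  · exact .inl (h ▸ (ZMod.val_add_of_lt hlt).symm)
  · exact .inr (h ▸ ZMod.val_add_val_of_le hge)

lemma ZMod.sum_range_add_natCast_eq_sum_indicator {M : Type*} [AddCommMonoid M]
    (g : ZMod n → M) (s : ZMod n) {t : ℕ} (ht : t ≤ n) :
    ∑ r ∈ Finset.range t, g (s + r) = ∑ i, {i | (i - s).val < t}.indicator g i := by
  rw [Finset.sum_indicator_eq_sum_filter]
  refine Finset.sum_nbij' (fun r => s + r) (fun i => (i - s).val) ?_ ?_ ?_ ?_ ?_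
  · intro r hr
    simp only [Finset.mem_range] at hr
    simpa [ZMod.val_cast_of_lt (hr.trans_le ht)] using hr
  · intro i hi
    simpa using hi
  · intro r hr
    simp only [Finset.mem_range] at hr
    simp [ZMod.val_cast_of_lt (hr.trans_le ht)]
  · intro i _
    simp
  · intro r _
    rfl

-- `[s, j) ⊆ [b, j) ⊆ [b, a)` meets `[a, b]` only in `b`, and `b ∈ [s, j) ⊆ [b, j)` forces `s = b`.
lemma eq_of_mem_circIco_of_mem_circIcc {a b i j s : ZMod n} (hj : j ∈ circIoc b a)
    (hi : i ∈ circIcc a b) (his : i ∈ circIco s j) (hs : (j - s).val ≤ (j - b).val) :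
    i = b ∧ s = b := by
  simp only [circIoc, circIcc, circIco, Set.mem_ofPred_eq] at hj hi his
  have := ZMod.val_sub_add_val_sub b a i
  have := ZMod.val_sub_add_val_sub b a b
  have := ZMod.val_sub_add_val_sub b s j
  have := ZMod.val_sub_add_val_sub b s i
  have := ZMod.val_lt (s - b)
  have : (b - b).val = 0 := by simp
  exact ⟨eq_of_val_sub_eq_zero (by omega), eq_of_val_sub_eq_zero (by omega)⟩

lemma dotProduct_indicator_circIco {R : Type*} [Semiring R] {x g : ZMod n → R}
    {a b j s : ZMod n} (hx : ∀ i, x i ≠ 0 → i ∈ circIcc a b) (hj : j ∈ circIoc b a)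
    (hs : (j - s).val ≤ (j - b).val) :
    x ⬝ᵥ (circIco s j).indicator g = if s = b then x b * g b else 0 := by
  have hsupp : ∀ i, x i * (circIco s j).indicator g i ≠ 0 → i = b ∧ s = b := by
    intro i hi
    have his : i ∈ circIco s j := by
      by_contra h
      simp [h] at hi
    exact eq_of_mem_circIco_of_mem_circIcc hj (hx i (left_ne_zero_of_mul hi)) his hs
  rw [dotProduct, Finset.sum_eq_single b (fun i _ hib => not_not.mp fun h => hib (hsupp i h).1)
    (by simp)]
  split_ifs with hsb
  · subst hsb
    rw [Set.indicator_of_mem]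
    have := hj.1
    simp only [circIco, Set.mem_ofPred_eq, sub_self, ZMod.val_zero]
    omega
  · exact not_not.mp fun h => hsb (hsupp b h).2

lemma eq_zero_of_forall_dotProduct_sum_indicator_circIco_eq_zero
    {F ι : Type*} [Field F] [Fintype ι] {e : ι → ZMod n} (he : Function.Injective e)
    {x : ZMod n → ZMod n → F} {aa : ZMod n → ZMod n} (hspans : ∀ l, IsSpan (x l) (aa l) l)
    {j : ZMod n} {g : ι → ZMod n → F} (hg : ∀ t, g t (e t) = 1) {β : ι → F}
    (hβ : ∀ t, j ∉ circIoc (e t) (aa (e t)) → β t = 0)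
    (horth : ∀ t, x (e t) ⬝ᵥ ∑ t', β t' • (circIco (e t') j).indicator (g t') = 0) :
    β = 0 := by
  by_contra hne
  have hT : (Finset.univ.filter fun t => β t ≠ 0).Nonempty := by
    obtain ⟨t, ht⟩ := Function.ne_iff.mp hne
    exact ⟨t, by simpa using ht⟩
  obtain ⟨b, hb, hmax⟩ := Finset.exists_max_image _ (fun t => (j - e t).val) hT
  simp only [Finset.mem_filter, Finset.mem_univ, true_and] at hb hmax
  have hj : j ∈ circIoc (e b) (aa (e b)) := not_not.mp fun h => hb (hβ b h)
  have key := horth b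
  rw [dotProduct_sum, Finset.sum_eq_single b, dotProduct_smul,
    dotProduct_indicator_circIco (hspans _).2.2 hj le_rfl, if_pos rfl, hg, mul_one,
    smul_eq_mul] at key
  · exact mul_ne_zero hb (hspans _).2.1 key
  · intro t _ htb
    by_cases ht : β t = 0
    · simp [ht]
    · rw [dotProduct_smul, dotProduct_indicator_circIco (hspans _).2.2 hj (hmax t ht),
        if_neg (he.ne htb), smul_zero]
  · simp

end CyclicWindows

namespace BCJR

variable {n : ℕ} {ι κ R : Type*} [Fintype κ] [CommSemiring R]
  {x : ι → ZMod n → R} {H : Matrix κ (ZMod n) R} {N : ZMod n → Matrix ι κ R}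
  (hN : ∀ j, N (j + 1) = N j + of fun l c => x l j * H c j)
include hN

lemma mulVec_apply_add_natCast (u : κ → R) (l : ι) (s : ZMod n) (t : ℕ) :
    (N (s + t) *ᵥ u) l
      = (N s *ᵥ u) l + ∑ r ∈ Finset.range t, x l (s + r) * (u ᵥ* H) (s + r) := by
  induction t with
  | zero => simp
  | succ t ih =>
    rw [Nat.cast_succ, ← add_assoc, hN, add_mulVec, Pi.add_apply, ih, Finset.sum_range_succ,
      add_assoc]
    simp [mulVec, vecMul, dotProduct, Finset.mul_sum, mul_comm, mul_left_comm]

lemma mulVec_apply_eq_add_dotProduct_indicator [NeZero n] (u : κ → R) (l : ι) (s j : ZMod n) :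
    (N j *ᵥ u) l = (N s *ᵥ u) l + x l ⬝ᵥ (circIco s j).indicator (u ᵥ* H) := by
  have h := mulVec_apply_add_natCast hN u l s (j - s).val
  rw [ZMod.natCast_zmod_val, add_sub_cancel, ZMod.sum_range_add_natCast_eq_sum_indicator
    (fun i => x l i * (u ᵥ* H) i) s (ZMod.val_lt _).le] at h
  rw [h, dotProduct]
  simp_rw [← Set.indicator_mul_right]
  rfl

lemma vecMul_apply_eq_one [IsLeftCancelMulZero R] {u : κ → R} {l : ι} {s : ZMod n}
    (hs : (N s *ᵥ u) l = 0) (hx : x l s ≠ 0) (hu : x l s = (N (s + 1) *ᵥ u) l) :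
    (u ᵥ* H) s = 1 := by
  have h := mulVec_apply_add_natCast hN u l s 1
  rw [Nat.cast_one, hs, ← hu] at h
  simp only [Finset.sum_range_one, Nat.cast_zero, add_zero, zero_add] at h
  exact mul_left_cancel₀ hx (h.symm.trans (mul_one _).symm)

end BCJR

lemma dotProduct_eq_zero_of_mem_span {R κ : Type*} [CommSemiring R] [Fintype κ]
    {s : Set (κ → R)} {w u : κ → R} (hw : ∀ v ∈ s, v ⬝ᵥ w = 0) (hu : u ∈ Submodule.span R s) :
    u ⬝ᵥ w = 0 := by
  induction hu using Submodule.span_induction with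
  | mem v hv => exact hw v hv
  | zero => exact zero_dotProduct w
  | add v v' _ _ hv hv' => rw [add_dotProduct, hv, hv', add_zero]
  | smul c v _ hv => rw [smul_dotProduct, hv, smul_zero]

namespace Matrix

variable {F : Type*} [Field F] {ι κ : Type*} [Fintype κ]

lemma mulVec_eq_zero_iff_of_linearIndependent [Fintype ι] {V : Matrix ι κ F}
    (hV : LinearIndependent F fun i => V i) (hcard : Fintype.card ι = Fintype.card κ)
    {u : κ → F} : V *ᵥ u = 0 ↔ u = 0 := by
  refine ⟨fun hu => ?_, fun hu => hu ▸ mulVec_zero V⟩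
  have htop : Submodule.span F (Set.range fun i => V i) = ⊤ :=
    hV.span_eq_top_of_card_eq_finrank' (by simpa using hcard)
  funext k
  rw [← single_one_dotProduct k u]
  refine dotProduct_eq_zero_of_mem_span ?_ (htop ▸ Submodule.mem_top)
  rintro _ ⟨i, rfl⟩
  exact congrFun hu i

lemma rank_eq_of_mulVec_eq_zero_iff {ι' : Type*} (A : Matrix ι κ F) (B : Matrix ι' κ F)
    (h : ∀ u, A *ᵥ u = 0 ↔ B *ᵥ u = 0) : A.rank = B.rank := by
  have hker : LinearMap.ker A.mulVecLin = LinearMap.ker B.mulVecLin := by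
    ext u
    exact h u
  have hA := LinearMap.finrank_range_add_finrank_ker A.mulVecLin
  have hB := LinearMap.finrank_range_add_finrank_ker B.mulVecLin
  rw [hker] at hA
  exact Nat.add_right_cancel (hA.trans hB.symm)

lemma rank_eq_of_vecMul_eq_zero_iff [Fintype ι] {κ' : Type*} [Fintype κ']
    (A : Matrix ι κ F) (B : Matrix ι κ' F) (h : ∀ u, u ᵥ* A = 0 ↔ u ᵥ* B = 0) :
    A.rank = B.rank := by
  rw [← rank_transpose A, ← rank_transpose B]
  exact rank_eq_of_mulVec_eq_zero_iff _ _ (by simpa only [mulVec_transpose] using h)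

lemma finrank_ker_transpose_vecMulLinear_add_rank {κ' : Type*} [Fintype κ']
    (H : Matrix κ' κ F) :
    Module.finrank F (LinearMap.ker Hᵀ.vecMulLinear) + H.rank = Fintype.card κ := by
  have h : Hᵀ.vecMulLinear = H.mulVecLin := by
    ext u
    simp
  rw [h, add_comm, rank, LinearMap.finrank_range_add_finrank_ker,
    Module.finrank_fintype_fun_eq_card]

lemma span_range_eq_of_finrank_le_rank [Finite ι] (X : Matrix ι κ F)
    {C : Submodule F (κ → F)} (hX : ∀ i, X i ∈ C) (hC : Module.finrank F C ≤ X.rank) :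
    Submodule.span F (Set.range X) = C :=
  Submodule.eq_of_le_of_finrank_le (Submodule.span_le.mpr (Set.range_subset_iff.mpr hX))
    (X.rank_eq_finrank_span_row ▸ hC)

lemma dotProduct_eq_zero_of_mem_ker [Fintype ι] {κ' : Type*} [Fintype κ'] {X : Matrix ι κ F}
    {H : Matrix κ' κ F} (hX : ∀ i, X i ∈ LinearMap.ker Hᵀ.vecMulLinear)
    (hrank : Fintype.card κ ≤ X.rank + H.rank) {w : κ → F} (hw : ∀ i, X i ⬝ᵥ w = 0) {c : κ → F}
    (hc : c ∈ LinearMap.ker Hᵀ.vecMulLinear) : c ⬝ᵥ w = 0 := by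
  have hspan := X.span_range_eq_of_finrank_le_rank hX
    (by have := H.finrank_ker_transpose_vecMulLinear_add_rank; omega)
  refine dotProduct_eq_zero_of_mem_span ?_ (hspan ▸ hc)
  rintro _ ⟨i, rfl⟩
  exact hw i

end Matrix

def probeMatrix {n m : ℕ} [NeZero n] {F : Type*} (v : ZMod n → Fin m → F) (K : Finset (ZMod n)) :
    Matrix ↑(Kᶜ) (Fin m) F :=
  of fun mm => v mm.1

section DualPairing

variable {F : Type*} [Field F] {n m : ℕ} [NeZero n] {x : ZMod n → ZMod n → F} {aa : ZMod n → ZMod n}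
  {H : Matrix (Fin m) (ZMod n) F} {N : ZMod n → Matrix (ZMod n) (Fin m) F}
  {v : ZMod n → Fin m → F} {K : Finset (ZMod n)} {j : ZMod n} {P : Matrix ↑(Kᶜ) (Fin m) F}

lemma stateRows_mul_transpose_eq
    (hP : ∀ mm c, P mm c = if j ∈ circIoc mm.1 (aa mm.1) then v mm.1 c else 0)
    (hvanish : ∀ mm : ↑(Kᶜ), j ∉ circIoc mm.1 (aa mm.1) → ∀ l : ↑K, (N j *ᵥ v mm) l = 0) :
    (of fun (l : ↑K) c => N j l.1 c) * Pᵀ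
      = (of fun (l : ↑K) c => N j l.1 c) * (probeMatrix v K)ᵀ := by
  ext l mm
  simp only [mul_apply, transpose_apply, hP]
  split_ifs with h
  · rfl
  · simp only [mul_zero, Finset.sum_const_zero]
    exact (hvanish mm h l).symm

lemma transpose_mulVec_eq_probeMatrix_transpose_mulVec
    (hP : ∀ mm c, P mm c = if j ∈ circIoc mm.1 (aa mm.1) then v mm.1 c else 0)
    (β : ↑(Kᶜ) → F) :
    Pᵀ *ᵥ β = (probeMatrix v K)ᵀ *ᵥ fun mm => if j ∈ circIoc mm.1 (aa mm.1) then β mm else 0 := by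
  ext c
  simp only [mulVec, dotProduct, transpose_apply, hP]
  refine Finset.sum_congr rfl fun mm _ => ?_
  split_ifs <;> simp [probeMatrix]

variable (hN : ∀ i, N (i + 1) = N i + of fun l c => x l i * H c i)
  (hbase : ∀ (mm : ↑(Kᶜ)) (l : ↑K), (N mm *ᵥ v mm) l = 0)
include hN hbase

lemma stateRows_mul_probeMatrix_transpose_apply (l : ↑K) (mm : ↑(Kᶜ)) :
    ((of fun (l : ↑K) c => N j l.1 c) * (probeMatrix v K)ᵀ) l mm
      = x l ⬝ᵥ (circIco mm.1 j).indicator (v mm ᵥ* H) := by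
  have h := BCJR.mulVec_apply_eq_add_dotProduct_indicator hN (v mm) l mm j
  rwa [hbase, zero_add] at h

lemma eq_zero_of_stateRows_mul_probeMatrix_transpose_mulVec_eq_zero
    (hspans : ∀ l, IsSpan (x l) (aa l) l) (hnorm : ∀ mm : ↑(Kᶜ), (v mm ᵥ* H) mm = 1)
    (horth : ∀ w, (∀ l : ↑K, x l ⬝ᵥ w = 0) → ∀ mm : ↑(Kᶜ), x mm ⬝ᵥ w = 0)
    {γ : ↑(Kᶜ) → F} (hγ : ∀ mm : ↑(Kᶜ), j ∉ circIoc mm.1 (aa mm.1) → γ mm = 0)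
    (h : ((of fun (l : ↑K) c => N j l.1 c) * (probeMatrix v K)ᵀ) *ᵥ γ = 0) : γ = 0 := by
  refine eq_zero_of_forall_dotProduct_sum_indicator_circIco_eq_zero Subtype.val_injective
    hspans hnorm hγ (horth _ fun l => ?_)
  refine Eq.trans ?_ (congrFun h l)
  rw [dotProduct_sum]
  simp only [dotProduct_smul, smul_eq_mul,
    ← stateRows_mul_probeMatrix_transpose_apply hN hbase]
  simp only [mulVec, dotProduct, mul_comm]

lemma stateRows_mul_transpose_mulVec_eq_zero_iff
    (hP : ∀ mm c, P mm c = if j ∈ circIoc mm.1 (aa mm.1) then v mm.1 c else 0)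
    (hspans : ∀ l, IsSpan (x l) (aa l) l) (hnorm : ∀ mm : ↑(Kᶜ), (v mm ᵥ* H) mm = 1)
    (horth : ∀ w, (∀ l : ↑K, x l ⬝ᵥ w = 0) → ∀ mm : ↑(Kᶜ), x mm ⬝ᵥ w = 0) (β : ↑(Kᶜ) → F) :
    ((of fun (l : ↑K) c => N j l.1 c) * Pᵀ) *ᵥ β = 0 ↔ Pᵀ *ᵥ β = 0 := by
  rw [← mulVec_mulVec, transpose_mulVec_eq_probeMatrix_transpose_mulVec hP, mulVec_mulVec]
  refine ⟨fun h => ?_, fun h => by rw [← mulVec_mulVec, h, mulVec_zero]⟩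
  rw [eq_zero_of_stateRows_mul_probeMatrix_transpose_mulVec_eq_zero hN hbase hspans hnorm horth
    (fun _ h => if_neg h) h, mulVec_zero]

end DualPairing

theorem stmt17_general (F : Type*) [Field F] (n k m : ℕ) [NeZero n] (hkm : k + m = n)
    (H : Matrix (Fin m) (ZMod n) F) (hH : H.rank = m)
    (x : ZMod n → ZMod n → F) (aa : ZMod n → ZMod n)
    (hxC : ∀ l i, ∑ j, x l j * H i j = 0)
    (hspans : ∀ l : ZMod n, IsSpan (x l) (aa l) l)
    (hsuppC : ∀ j : ZMod n, ∃ c ∈ LinearMap.ker H.transpose.vecMulLinear, c j ≠ 0)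
    (N : ZMod n → Matrix (ZMod n) (Fin m) F)
    (hNrec : ∀ j : ZMod n, N (j + 1) = N j + Matrix.of (fun l c => x l j * H c j))
    (v : ZMod n → Fin m → F)
    (hv : ∀ mm : ZMod n, ∀ l ≠ mm, x l mm = ∑ c, N (mm + 1) l c * v mm c)
    (hvanish : ∀ mm : ZMod n, ∀ j ∉ circIoc mm (aa mm),
      ∀ l ≠ mm, ∑ c, N j l c * v mm c = 0)
    (K : Finset (ZMod n)) (hK : K.card = k)
    (hXrank : (Matrix.of fun (l : ↑K) j => x l.1 j).rank = k)
    (hvind : LinearIndependent F (fun mm : ↑(Kᶜ) => v mm.1))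
    (P : ZMod n → Matrix ↑(Kᶜ) (Fin m) F)
    (hP : ∀ j mm c, P j mm c = if j ∈ circIoc mm.1 (aa mm.1) then v mm.1 c else 0)
    (j : ZMod n) :
    (Matrix.of fun (l : ↑K) c => N j l.1 c).rank = (P j).rank ∧
    (Matrix.of fun (l : ↑K) c => N j l.1 c).rank
      = ((Matrix.of fun (l : ↑K) c => N j l.1 c) * (P j).transpose).rank ∧
    (∀ α : ↑K → F, (∀ β : ↑(Kᶜ) → F,
        α ⬝ᵥ (((Matrix.of fun (l : ↑K) c => N j l.1 c) * (P j).transpose) *ᵥ β) = 0) →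
        Matrix.vecMul α (Matrix.of fun (l : ↑K) c => N j l.1 c) = 0) ∧
    (∀ β : ↑(Kᶜ) → F, (∀ α : ↑K → F,
        α ⬝ᵥ (((Matrix.of fun (l : ↑K) c => N j l.1 c) * (P j).transpose) *ᵥ β) = 0) →
        Matrix.vecMul β (P j) = 0) := by
  set Nt := Matrix.of fun (l : ↑K) c => N j l.1 c
  have hKne : ∀ (l : ↑K) (mm : ↑(Kᶜ)), l.1 ≠ mm.1 := fun l mm h =>
    Finset.mem_compl.mp mm.2 (h ▸ l.2)
  have horth : ∀ w, (∀ l : ↑K, x l ⬝ᵥ w = 0) →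
      ∀ c ∈ LinearMap.ker H.transpose.vecMulLinear, c ⬝ᵥ w = 0 := fun w hw _ =>
    dotProduct_eq_zero_of_mem_ker (X := of fun (l : ↑K) i => x l.1 i) (fun l => funext (hxC l))
      (by rw [hXrank, hH, ZMod.card]; omega) hw
  have hsupp : ∀ i, ∃ l : ↑K, x l i ≠ 0 := fun i => by
    by_contra! h0
    obtain ⟨c, hc, hci⟩ := hsuppC i
    exact hci (by simpa using horth (Pi.single i 1) (fun l => by simp [h0 l]) c hc)
  have hbase : ∀ (mm : ↑(Kᶜ)) (l : ↑K), (N mm *ᵥ v mm) l = 0 := fun mm l =>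
    hvanish mm mm (left_notMem_circIoc _ _) l (hKne l mm)
  have hnorm : ∀ mm : ↑(Kᶜ), (v mm ᵥ* H) mm = 1 := fun mm =>
    have ⟨l, hl⟩ := hsupp mm
    BCJR.vecMul_apply_eq_one hNrec (hbase mm l) hl (hv mm l (hKne l mm))
  have hNP := stateRows_mul_transpose_eq (hP j) fun mm h l => hvanish mm j h l (hKne l mm)
  have hleft : ∀ α, α ᵥ* (Nt * (P j)ᵀ) = 0 ↔ α ᵥ* Nt = 0 := fun α => by
    rw [hNP, ← vecMul_vecMul, vecMul_transpose]
    exact mulVec_eq_zero_iff_of_linearIndependent hvind (by simp [hK]; omega)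
  have hright := stateRows_mul_transpose_mulVec_eq_zero_iff hNrec hbase (hP j) hspans hnorm
    fun w hw mm => horth w hw _ (funext (hxC mm))
  have hrankL := rank_eq_of_vecMul_eq_zero_iff _ _ hleft
  have hrankR := rank_eq_of_mulVec_eq_zero_iff _ _ hright
  refine ⟨by rw [← hrankL, hrankR, rank_transpose], hrankL.symm, fun α hα => ?_, fun β hβ => ?_⟩
  · exact (hleft α).1 (dotProduct_eq_zero _ fun β => by rw [← dotProduct_mulVec]; exact hα β)
  · rw [← mulVec_transpose]
    exact (hright β).1 (dotProduct_eq_zero _ fun α => by rw [dotProduct_comm]; exact hβ α)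

/-- Non-degeneracy of the pairing between primal and dual state spaces: with
`Ñ_j` the state matrices of the KV-trellis `T_{(X̃,H,S)}` (rows of the full BCJR
state matrices `N_j` indexed by `K`) and `P_j` the matrices whose row `m ∈ K̂` is
`v_m` if `j ∈ (m, a_m]` and `0` otherwise, one has
`rk Ñ_j = rk P_j = rk(Ñ_j P_jᵀ)` for every `j`, and the bilinear pairing
`(α Ñ_j, β P_j) ↦ α Ñ_j P_jᵀ βᵀ` is non-degenerate. -/
theorem stmt17 (F : Type*) [Field F] (n k m : ℕ) [NeZero n] (hkm : k + m = n)
    (H : Matrix (Fin m) (ZMod n) F) (hH : H.rank = m)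
    (x : ZMod n → ZMod n → F) (aa : ZMod n → ZMod n)
    (hxC : ∀ l i, ∑ j, x l j * H i j = 0)
    (hspanC : Submodule.span F (Set.range x)
      = LinearMap.ker H.transpose.vecMulLinear)
    (hspans : ∀ l : ZMod n, IsSpan (x l) (aa l) l)
    (ha : Function.Injective aa)
    (hcover : ∀ j : ZMod n,
      (Finset.univ.filter fun l => j ∈ circIoc (aa l) l).card = m)
    (hsuppC : ∀ j : ZMod n, ∃ c ∈ LinearMap.ker H.transpose.vecMulLinear, c j ≠ 0)
    (hsuppD : ∀ j : ZMod n, ∃ i, H i j ≠ 0)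
    (N : ZMod n → Matrix (ZMod n) (Fin m) F)
    (hN0 : ∀ l c, N 0 l c =
      ∑ j ∈ Finset.univ.filter (fun j : ZMod n => (aa l).val ≤ j.val), x l j * H c j)
    (hNrec : ∀ j : ZMod n, N (j + 1) = N j + Matrix.of (fun l c => x l j * H c j))
    (v : ZMod n → Fin m → F)
    (hv : ∀ mm : ZMod n, ∀ l ≠ mm, x l mm = ∑ c, N (mm + 1) l c * v mm c)
    (hvanish : ∀ mm : ZMod n, ∀ j ∉ circIoc mm (aa mm),
      ∀ l ≠ mm, ∑ c, N j l c * v mm c = 0)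
    (K : Finset (ZMod n)) (hK : K.card = k)
    (hXrank : (Matrix.of fun (l : ↑K) j => x l.1 j).rank = k)
    (hvind : LinearIndependent F (fun mm : ↑(Kᶜ) => v mm.1))
    (P : ZMod n → Matrix ↑(Kᶜ) (Fin m) F)
    (hP : ∀ j mm c, P j mm c = if j ∈ circIoc mm.1 (aa mm.1) then v mm.1 c else 0)
    (j : ZMod n) :
    (Matrix.of fun (l : ↑K) c => N j l.1 c).rank = (P j).rank ∧
    (Matrix.of fun (l : ↑K) c => N j l.1 c).rank
      = ((Matrix.of fun (l : ↑K) c => N j l.1 c) * (P j).transpose).rank ∧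
    (∀ α : ↑K → F, (∀ β : ↑(Kᶜ) → F,
        α ⬝ᵥ (((Matrix.of fun (l : ↑K) c => N j l.1 c) * (P j).transpose) *ᵥ β) = 0) →
        Matrix.vecMul α (Matrix.of fun (l : ↑K) c => N j l.1 c) = 0) ∧
    (∀ β : ↑(Kᶜ) → F, (∀ α : ↑K → F,
        α ⬝ᵥ (((Matrix.of fun (l : ↑K) c => N j l.1 c) * (P j).transpose) *ᵥ β) = 0) →
        Matrix.vecMul β (P j) = 0) :=
  stmt17_general F n k m hkm H hH x aa hxC hspans hsuppC N hNrec v hv hvanish K hK hXrank hvind P hP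
    j
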